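/- arXiv:2502.09817 — 2 statements merged into one kernel-verified Lean document; each statement's English description precedes it below -/
import Mathlib

section
/- Let 𝔽 = F_5, K = 3, F = (1, 1, 1) and G = (1, 2, 3) as 1×3 row vectors. For any secure aggregation scheme for (F, G), the mutual information between the first two messages and the first two input rows satisfies I[(X_1, X_2) : (row 1 of W, row 2 of W)] ≤ L · log 5. -/
/-!
Shannon entropy machinery for finitely-supported random variables on a finite
probability space, and the definition of a vector-linear secure aggregation
scheme (Yuan–Sun, "Vector Linear Secure Aggregation").
-/

open scoped BigOperators Classical

namespace SecAgg

noncomputable section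

variable {Ω : Type*} [Fintype Ω]

/-- Probability that the random variable `X` takes the value `a`, under the
probability mass function `p` on the finite sample space `Ω`. -/
def pr {α : Type*} (p : Ω → ℝ) (X : Ω → α) (a : α) : ℝ :=
  ∑ ω, if X ω = a then p ω else 0

/-- Shannon entropy (natural-log units) of a random variable `X` on a finite
probability space with mass function `p`. -/
def H {α : Type*} (p : Ω → ℝ) (X : Ω → α) : ℝ :=
  ∑ a ∈ Finset.univ.image X, Real.negMulLog (pr p X a)

/-- Conditional Shannon entropy `H[X | Y] = H[(X,Y)] - H[Y]`. -/
def Hc {α β : Type*} (p : Ω → ℝ) (X : Ω → α) (Y : Ω → β) : ℝ :=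
  H p (fun ω => (X ω, Y ω)) - H p Y

/-- Mutual information `I[X : Y] = H[X] + H[Y] - H[(X,Y)]`. -/
def MI {α β : Type*} (p : Ω → ℝ) (X : Ω → α) (Y : Ω → β) : ℝ :=
  H p X + H p Y - H p (fun ω => (X ω, Y ω))

/-- Conditional mutual information
`I[X : Y | Z] = H[(X,Z)] + H[(Y,Z)] - H[(X,Y,Z)] - H[Z]`. -/
def CMI {α β γ : Type*} (p : Ω → ℝ) (X : Ω → α) (Y : Ω → β) (Z : Ω → γ) : ℝ :=
  H p (fun ω => (X ω, Z ω)) + H p (fun ω => (Y ω, Z ω))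
    - H p (fun ω => (X ω, Y ω, Z ω)) - H p Z

/-- A secure aggregation scheme for the pair of linear maps `(F, G)`:
`K` users, inputs of length `L` over the finite field `𝔽`; the server must
learn `F * W` and nothing more about `G * W`.  `κ k` is the alphabet of
user `k`'s key, `σ` the alphabet of the source key, `χ k` the alphabet of
user `k`'s message. -/
structure Scheme (𝔽 : Type) [Field 𝔽] [Fintype 𝔽] (L : ℕ) {K M N : ℕ}
    (F : Matrix (Fin M) (Fin K) 𝔽) (G : Matrix (Fin N) (Fin K) 𝔽)
    (Ω : Type) [Fintype Ω] (κ : Fin K → Type) (σ : Type) (χ : Fin K → Type) where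
  /-- probability mass function on the sample space -/
  p : Ω → ℝ
  p_nonneg : ∀ ω, 0 ≤ p ω
  p_sum_one : ∑ ω, p ω = 1
  /-- the input, a `K × L` matrix of field elements (row `k` is user `k`'s input) -/
  W : Ω → Matrix (Fin K) (Fin L) 𝔽
  /-- user `k`'s key -/
  Z : ∀ k : Fin K, Ω → κ k
  /-- the source key -/
  Zsrc : Ω → σ
  /-- user `k`'s message -/
  X : ∀ k : Fin K, Ω → χ k
  /-- the input is uniformly distributed -/
  W_unif : ∀ w : Matrix (Fin K) (Fin L) 𝔽,
    pr p W w = (Fintype.card (Matrix (Fin K) (Fin L) 𝔽) : ℝ)⁻¹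
  /-- the input is independent of all keys (including the source key) -/
  indep : ∀ (w : Matrix (Fin K) (Fin L) 𝔽) (z : (∀ k, κ k) × σ),
    pr p (fun ω => (W ω, ((fun k => Z k ω), Zsrc ω))) (w, z)
      = pr p W w * pr p (fun ω => ((fun k => Z k ω), Zsrc ω)) z
  /-- each key is a deterministic function of the source key -/
  Z_det : ∀ k : Fin K, ∃ f : σ → κ k, ∀ ω, Z k ω = f (Zsrc ω)
  /-- each message is a deterministic function of (own input row, own key) -/
  X_det : ∀ k : Fin K, ∃ f : (Fin L → 𝔽) → κ k → χ k, ∀ ω, X k ω = f (W ω k) (Z k ω)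
  /-- correctness: `F ⬝ W` is determined by the messages -/
  correct : Hc p (fun ω => F * W ω) (fun ω k => X k ω) = 0
  /-- security: the messages reveal nothing about `G ⬝ W` beyond `F ⬝ W` -/
  secure : CMI p (fun ω => G * W ω) (fun ω k => X k ω) (fun ω => F * W ω) = 0

end

end SecAgg
namespace SecAgg

instance : Fact (Nat.Prime 5) := ⟨by norm_num⟩

section Lemmas
open Finset Real

variable {Ω : Type*} [Fintype Ω] {α β γ τ ι : Type*} {p : Ω → ℝ}

lemma pr_nonneg (hp : ∀ ω, 0 ≤ p ω) (X : Ω → α) (a : α) : 0 ≤ pr p X a :=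
  Finset.sum_nonneg fun ω _ => by by_cases h : X ω = a <;> simp [h, hp ω]

lemma sum_image_pr_mul [DecidableEq α] (X : Ω → α) (f : α → ℝ) :
    ∑ a ∈ Finset.univ.image X, pr p X a * f a = ∑ ω, p ω * f (X ω) := by
  unfold pr
  simp only [Finset.sum_mul, ite_mul, zero_mul]
  rw [Finset.sum_comm]
  refine Finset.sum_congr rfl fun ω _ => ?_
  rw [Finset.sum_ite_eq (Finset.univ.image X) (X ω) (fun a => p ω * f a)]
  simp

lemma sum_pr [DecidableEq α] (hp1 : ∑ ω, p ω = 1) (X : Ω → α) :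
    ∑ a ∈ Finset.univ.image X, pr p X a = 1 := by
  have := sum_image_pr_mul (p := p) X (fun _ => 1)
  simpa [hp1] using this

lemma H_eq (X : Ω → α) : H p X = ∑ ω, p ω * (-Real.log (pr p X (X ω))) := by
  unfold H
  rw [← sum_image_pr_mul X (fun a => -Real.log (pr p X a))]
  refine Finset.sum_congr rfl fun a _ => ?_
  rw [Real.negMulLog]; ring

lemma le_pr (hp : ∀ ω, 0 ≤ p ω) (X : Ω → α) (ω : Ω) : p ω ≤ pr p X (X ω) := by
  have := Finset.single_le_sum (f := fun ω' => if X ω' = X ω then p ω' else 0)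
    (fun ω' _ => by split <;> simp [hp ω']) (Finset.mem_univ ω)
  simpa [pr] using this

lemma pr_le (hp : ∀ ω, 0 ≤ p ω) {X : Ω → α} {Y : Ω → β} {a : α} {b : β}
    (h : ∀ ω, X ω = a → Y ω = b) : pr p X a ≤ pr p Y b := by
  refine Finset.sum_le_sum fun ω _ => ?_
  by_cases hx : X ω = a
  · rw [if_pos hx, if_pos (h ω hx)]
  · rw [if_neg hx]; split <;> simp [hp ω]

lemma pr_congr_point {X : Ω → α} {Y : Ω → β} (f : α → β) (g : β → α)
    (hf : ∀ ω, Y ω = f (X ω)) (hg : ∀ ω, X ω = g (Y ω)) (ω : Ω) :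
    pr p Y (Y ω) = pr p X (X ω) := by
  refine Finset.sum_congr rfl fun ω' _ => ?_
  have : (Y ω' = Y ω) = (X ω' = X ω) :=
    propext ⟨fun h => by rw [hg ω', hg ω, h], fun h => by rw [hf ω', hf ω, h]⟩
  rw [this]

lemma H_congr {X : Ω → α} {Y : Ω → β} (f : α → β) (g : β → α)
    (hf : ∀ ω, Y ω = f (X ω)) (hg : ∀ ω, X ω = g (Y ω)) : H p Y = H p X := by
  rw [H_eq, H_eq]
  exact Finset.sum_congr rfl fun ω _ => by rw [pr_congr_point f g hf hg]

lemma H_le_H_pair (hp : ∀ ω, 0 ≤ p ω) (X : Ω → α) (Y : Ω → β) :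
    H p Y ≤ H p (fun ω => (X ω, Y ω)) := by
  rw [H_eq, H_eq]
  refine Finset.sum_le_sum fun ω _ => ?_
  rcases (hp ω).eq_or_lt with h0 | h0
  · rw [← h0]; simp
  · have h1 : pr p (fun ω => (X ω, Y ω)) (X ω, Y ω) ≤ pr p Y (Y ω) :=
      pr_le hp (fun ω' hh => by exact congrArg Prod.snd hh)
    have h2 : 0 < pr p (fun ω => (X ω, Y ω)) (X ω, Y ω) :=
      lt_of_lt_of_le h0 (le_pr hp _ ω)
    have := Real.log_le_log h2 h1
    nlinarith

lemma H_pair_of_indep (hp : ∀ ω, 0 ≤ p ω) (X : Ω → α) (Y : Ω → β)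
    (h : ∀ a b, pr p (fun ω => (X ω, Y ω)) (a, b) = pr p X a * pr p Y b) :
    H p (fun ω => (X ω, Y ω)) = H p X + H p Y := by
  rw [H_eq, H_eq, H_eq, ← Finset.sum_add_distrib]
  refine Finset.sum_congr rfl fun ω _ => ?_
  rcases (hp ω).eq_or_lt with h0 | h0
  · rw [← h0]; ring
  · have hX : 0 < pr p X (X ω) := lt_of_lt_of_le h0 (le_pr hp X ω)
    have hY : 0 < pr p Y (Y ω) := lt_of_lt_of_le h0 (le_pr hp Y ω)
    rw [h (X ω) (Y ω), Real.log_mul (ne_of_gt hX) (ne_of_gt hY)]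
    ring

lemma H_uniform [Fintype α] [Nonempty α] (hp1 : ∑ ω, p ω = 1) (X : Ω → α)
    (h : ∀ a, pr p X a = (Fintype.card α : ℝ)⁻¹) :
    H p X = Real.log (Fintype.card α) := by
  rw [H_eq]
  have : ∀ ω : Ω, p ω * (-Real.log (pr p X (X ω))) = p ω * Real.log (Fintype.card α) := by
    intro ω; rw [h (X ω), Real.log_inv]; ring
  rw [Finset.sum_congr rfl fun ω _ => this ω, ← Finset.sum_mul, hp1, one_mul]

lemma pr_marg [DecidableEq ι] (T : Ω → τ) (s : Finset τ) (hs : ∀ ω, T ω ∈ s) (g : τ → ι) (b : ι) :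
    pr p (fun ω => g (T ω)) b = ∑ t ∈ s, if g t = b then pr p T t else 0 := by
  unfold pr
  have : ∀ t, (if g t = b then ∑ ω, if T ω = t then p ω else 0 else 0)
      = ∑ ω, if T ω = t ∧ g t = b then p ω else 0 := by
    intro t
    split
    · refine Finset.sum_congr rfl fun ω _ => by simp [*]
    · symm; refine Finset.sum_eq_zero fun ω _ => by simp_all
  simp only [this]
  rw [Finset.sum_comm]
  refine Finset.sum_congr rfl fun ω _ => ?_
  simp only [ite_and]
  rw [Finset.sum_ite_eq s (T ω) (fun t => if g t = b then p ω else 0)]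
  simp [hs ω]

lemma CMI_nonneg (hp : ∀ ω, 0 ≤ p ω) (hp1 : ∑ ω, p ω = 1)
    (X : Ω → α) (Y : Ω → β) (Z : Ω → γ) : 0 ≤ CMI p X Y Z := by
  classical
  set T : Ω → α × β × γ := fun ω => (X ω, Y ω, Z ω) with hT
  set qac : α × γ → ℝ := pr p (fun ω => (X ω, Z ω)) with hqac
  set qbc : β × γ → ℝ := pr p (fun ω => (Y ω, Z ω)) with hqbc
  set q3 : α × β × γ → ℝ := pr p T with hq3
  set qc : γ → ℝ := pr p Z with hqc
  set r : α × β × γ → ℝ :=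
    fun t => qac (t.1, t.2.2) * qbc (t.2.1, t.2.2) / (q3 t * qc t.2.2) with hr
  have key : ∑ ω, p ω * r (T ω) ≤ 1 := by
    rw [← sum_image_pr_mul T r]
    have step1 : ∀ t ∈ Finset.univ.image T,
        pr p T t * r t ≤ qac (t.1, t.2.2) * qbc (t.2.1, t.2.2) / qc t.2.2 := by
      intro t _
      have h1 : 0 ≤ qac (t.1, t.2.2) := pr_nonneg hp _ _
      have h2 : 0 ≤ qbc (t.2.1, t.2.2) := pr_nonneg hp _ _
      have h3 : 0 ≤ qc t.2.2 := pr_nonneg hp _ _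
      rcases eq_or_lt_of_le (pr_nonneg hp T t) with h0 | h0
      · rw [← h0, zero_mul]; positivity
      · have hq3t : q3 t = pr p T t := rfl
        rw [hr]
        have hne : q3 t ≠ 0 := by rw [hq3t]; exact ne_of_gt h0
        have : pr p T t * (qac (t.1, t.2.2) * qbc (t.2.1, t.2.2) / (q3 t * qc t.2.2))
            = qac (t.1, t.2.2) * qbc (t.2.1, t.2.2) / qc t.2.2 := by
          rw [hq3t] at hne ⊢
          rcases eq_or_lt_of_le h3 with hc0 | hc0
          · rw [← hc0]; simp
          · field_simp
        rw [this]
    refine le_trans (Finset.sum_le_sum step1) ?_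
    set e : α × β × γ → (α × γ) × (β × γ) := fun t => ((t.1, t.2.2), (t.2.1, t.2.2)) with he
    set G : (α × γ) × (β × γ) → ℝ :=
      fun u => if u.2.2 = u.1.2 then qac u.1 * qbc u.2 / qc u.1.2 else 0 with hG
    have hGnn : ∀ u, 0 ≤ G u := by
      intro u
      have h1 : 0 ≤ qac u.1 := pr_nonneg hp _ _
      have h2 : 0 ≤ qbc u.2 := pr_nonneg hp _ _
      have h3 : 0 ≤ qc u.1.2 := pr_nonneg hp _ _
      rw [hG]; dsimp only; split
      · positivity
      · exact le_rfl
    have hinj : ∀ t ∈ Finset.univ.image T, ∀ t' ∈ Finset.univ.image T, e t = e t' → t = t' := by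
      intro t _ t' _ h
      have h1 : t.1 = t'.1 := congrArg (fun u => u.1.1) h
      have h2 : t.2.1 = t'.2.1 := congrArg (fun u => u.2.1) h
      have h3 : t.2.2 = t'.2.2 := congrArg (fun u => u.2.2) h
      exact Prod.ext h1 (Prod.ext h2 h3)
    have hsum : ∑ t ∈ Finset.univ.image T,
        qac (t.1, t.2.2) * qbc (t.2.1, t.2.2) / qc t.2.2
        = ∑ u ∈ (Finset.univ.image T).image e, G u := by
      rw [Finset.sum_image hinj]
      refine Finset.sum_congr rfl fun t _ => ?_
      simp only [hG, he]
      rw [if_true]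
    rw [hsum]
    have hsubset : (Finset.univ.image T).image e ⊆
        (Finset.univ.image (fun ω => (X ω, Z ω))) ×ˢ (Finset.univ.image (fun ω => (Y ω, Z ω))) := by
      intro u hu
      simp only [Finset.mem_image] at hu
      obtain ⟨t, ⟨ω, _, rfl⟩, rfl⟩ := hu
      simp only [Finset.mem_product, Finset.mem_image]
      exact ⟨⟨ω, Finset.mem_univ ω, rfl⟩, ⟨ω, Finset.mem_univ ω, rfl⟩⟩
    refine le_trans (Finset.sum_le_sum_of_subset_of_nonneg hsubset fun u _ _ => hGnn u) ?_
    rw [Finset.sum_product]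
    have inner : ∀ ac : α × γ, ac ∈ Finset.univ.image (fun ω => (X ω, Z ω)) →
        ∑ u2 ∈ Finset.univ.image (fun ω => (Y ω, Z ω)), G (ac, u2) ≤ qac ac := by
      intro ac _
      have hmarg : pr p Z ac.2
          = ∑ u2 ∈ Finset.univ.image (fun ω => (Y ω, Z ω)),
              if u2.2 = ac.2 then pr p (fun ω => (Y ω, Z ω)) u2 else 0 :=
        pr_marg (fun ω => (Y ω, Z ω)) (Finset.univ.image (fun ω => (Y ω, Z ω)))
          (fun ω => Finset.mem_image_of_mem _ (Finset.mem_univ ω)) Prod.snd ac.2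
      have hterm : ∀ u2 : β × γ, G (ac, u2)
          = qac ac / qc ac.2 * (if u2.2 = ac.2 then pr p (fun ω => (Y ω, Z ω)) u2 else 0) := by
        intro u2
        have hGval : G (ac, u2) = if u2.2 = ac.2 then qac ac * qbc u2 / qc ac.2 else 0 := rfl
        rw [hGval]
        by_cases h : u2.2 = ac.2
        · rw [if_pos h, if_pos h, hqac, hqbc, hqc]
          ring
        · rw [if_neg h, if_neg h, mul_zero]
      have : ∑ u2 ∈ Finset.univ.image (fun ω => (Y ω, Z ω)), G (ac, u2)
          = qac ac / qc ac.2 * pr p Z ac.2 := by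
        rw [Finset.sum_congr rfl fun u2 _ => hterm u2, ← Finset.mul_sum, ← hmarg]
      rw [this]
      rcases eq_or_lt_of_le (pr_nonneg hp Z ac.2) with hc0 | hc0
      · rw [← hc0, mul_zero]
        exact pr_nonneg hp _ _
      · have hcq : pr p Z ac.2 ≠ 0 := ne_of_gt hc0
        rw [div_mul_cancel₀ _ ?hq]
        case hq => rw [hqc]; exact hcq
    calc ∑ ac ∈ Finset.univ.image (fun ω => (X ω, Z ω)),
          ∑ u2 ∈ Finset.univ.image (fun ω => (Y ω, Z ω)), G (ac, u2)
        ≤ ∑ ac ∈ Finset.univ.image (fun ω => (X ω, Z ω)), qac ac :=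
          Finset.sum_le_sum inner
      _ = 1 := sum_pr hp1 _
  -- pointwise entropy inequality
  have expand : CMI p X Y Z
      = ∑ ω, (p ω * (-Real.log (qac (X ω, Z ω))) + p ω * (-Real.log (qbc (Y ω, Z ω)))
          - p ω * (-Real.log (q3 (T ω))) - p ω * (-Real.log (qc (Z ω)))) := by
    unfold CMI
    rw [H_eq, H_eq, H_eq, H_eq, ← Finset.sum_add_distrib, ← Finset.sum_sub_distrib,
      ← Finset.sum_sub_distrib]
  rw [expand]
  have point : ∀ ω : Ω,
      p ω * (1 - r (T ω))
      ≤ p ω * (-Real.log (qac (X ω, Z ω))) + p ω * (-Real.log (qbc (Y ω, Z ω)))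
          - p ω * (-Real.log (q3 (T ω))) - p ω * (-Real.log (qc (Z ω))) := by
    intro ω
    rcases eq_or_lt_of_le (hp ω) with h0 | h0
    · rw [← h0]; simp
    · have hqacp : 0 < qac (X ω, Z ω) := lt_of_lt_of_le h0 (le_pr hp (fun ω => (X ω, Z ω)) ω)
      have hqbcp : 0 < qbc (Y ω, Z ω) := lt_of_lt_of_le h0 (le_pr hp (fun ω => (Y ω, Z ω)) ω)
      have hq3p : 0 < q3 (T ω) := lt_of_lt_of_le h0 (le_pr hp T ω)
      have hqcp : 0 < qc (Z ω) := lt_of_lt_of_le h0 (le_pr hp Z ω)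
      have hrpos : 0 < r (T ω) := by
        rw [hr]; dsimp only
        positivity
      have hlogr : Real.log (r (T ω))
          = Real.log (qac (X ω, Z ω)) + Real.log (qbc (Y ω, Z ω))
            - Real.log (q3 (T ω)) - Real.log (qc (Z ω)) := by
        rw [hr]; dsimp only
        rw [Real.log_div (by positivity) (by positivity), Real.log_mul (ne_of_gt hqacp)
          (ne_of_gt hqbcp), Real.log_mul (ne_of_gt hq3p) (ne_of_gt hqcp)]
        ring
      have hlb := Real.log_le_sub_one_of_pos hrpos
      have : 1 - r (T ω) ≤ -Real.log (qac (X ω, Z ω)) + -Real.log (qbc (Y ω, Z ω))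
          - -Real.log (q3 (T ω)) - -Real.log (qc (Z ω)) := by
        rw [show -Real.log (qac (X ω, Z ω)) + -Real.log (qbc (Y ω, Z ω))
          - -Real.log (q3 (T ω)) - -Real.log (qc (Z ω)) = -Real.log (r (T ω)) by
            rw [hlogr]; ring]
        linarith
      nlinarith [mul_le_mul_of_nonneg_left this (le_of_lt h0)]
  calc (0:ℝ) = 1 - 1 := by ring
    _ ≤ ∑ ω, p ω - ∑ ω, p ω * r (T ω) := by rw [hp1]; linarith [key]
    _ = ∑ ω, p ω * (1 - r (T ω)) := by
        rw [← Finset.sum_sub_distrib]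
        exact Finset.sum_congr rfl fun ω _ => by ring
    _ ≤ _ := Finset.sum_le_sum fun ω _ => point ω

lemma Hc_comp_ge (hp : ∀ ω, 0 ≤ p ω) (hp1 : ∑ ω, p ω = 1)
    (U : Ω → α) (V : Ω → β) (g : β → γ) :
    Hc p U V ≤ Hc p U (fun ω => g (V ω)) := by
  have h := CMI_nonneg hp hp1 U V (fun ω => g (V ω))
  have e1 : H p (fun ω => (V ω, g (V ω))) = H p V :=
    H_congr (fun v => (v, g v)) Prod.fst (fun ω => rfl) (fun ω => rfl)
  have e2 : H p (fun ω => (U ω, V ω, g (V ω))) = H p (fun ω => (U ω, V ω)) :=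
    H_congr (fun u => (u.1, u.2, g u.2)) (fun u => (u.1, u.2.1)) (fun ω => rfl) (fun ω => rfl)
  unfold CMI at h
  rw [e1, e2] at h
  unfold Hc
  linarith

section MatrixHelpers
open Finset

variable {L : ℕ}

abbrev V (L : ℕ) := Fin L → ZMod 5
abbrev Mat (L : ℕ) := Matrix (Fin 3) (Fin L) (ZMod 5)
abbrev Row (L : ℕ) := Matrix (Fin 1) (Fin L) (ZMod 5)

def e3 {L : ℕ} : (V L × V L × V L) ≃ Mat L where
  toFun t := Matrix.of ![t.1, t.2.1, t.2.2]
  invFun w := (w 0, w 1, w 2)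
  left_inv := by rintro ⟨a, b, c⟩; rfl
  right_inv := by
    intro w
    funext i j
    fin_cases i <;> rfl

lemma card_V : Fintype.card (V L) = 5 ^ L := by
  rw [Fintype.card_fun]
  simp [ZMod.card]

lemma card_Mat : Fintype.card (Mat L) = 5 ^ (3 * L) := by
  rw [← Fintype.card_congr (e3 (L := L))]
  simp only [Fintype.card_prod, card_V]
  ring

lemma card_Row : Fintype.card (Row L) = 5 ^ L := by
  have e1 : V L ≃ Row L :=
    ⟨fun v => Matrix.of fun _ j => v j, fun m => m 0, fun v => rfl,
     fun m => by funext i j; fin_cases i; rfl⟩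
  rw [← Fintype.card_congr e1, card_V]

lemma Fmul_apply (w : Mat L) (j : Fin L) :
    ((!![1, 1, 1] : Matrix (Fin 1) (Fin 3) (ZMod 5)) * w) 0 j = w 0 j + w 1 j + w 2 j := by
  rw [Matrix.mul_apply, Fin.sum_univ_three]
  simp [Matrix.cons_val_zero, Matrix.cons_val_one, Matrix.head_cons]

lemma Gmul_apply (w : Mat L) (j : Fin L) :
    ((!![1, 2, 3] : Matrix (Fin 1) (Fin 3) (ZMod 5)) * w) 0 j = w 0 j + 2 * w 1 j + 3 * w 2 j := by
  rw [Matrix.mul_apply, Fin.sum_univ_three]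
  simp [Matrix.cons_val_zero, Matrix.cons_val_one, Matrix.head_cons]

lemma Fmul_e3 (a b c : V L) (m : Row L) :
    (!![1, 1, 1] : Matrix (Fin 1) (Fin 3) (ZMod 5)) * (e3 (a, b, c)) = m
      ↔ c = fun j => m 0 j - a j - b j := by
  constructor
  · intro h
    funext j
    have := congrFun (congrFun h 0) j
    rw [Fmul_apply] at this
    have ha : e3 (a, b, c) 0 j = a j := rfl
    have hb : e3 (a, b, c) 1 j = b j := rfl
    have hc : e3 (a, b, c) 2 j = c j := rfl
    rw [ha, hb, hc] at this
    rw [← this]; ring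
  · intro h
    subst h
    funext i j
    fin_cases i
    show ((!![1, 1, 1] : Matrix (Fin 1) (Fin 3) (ZMod 5)) * e3 (a, b, fun j => m 0 j - a j - b j)) 0 j = m 0 j
    rw [Fmul_apply]
    show a j + b j + (m 0 j - a j - b j) = m 0 j
    ring

lemma e3_zero (a b d : V L) : (e3 (a, b, d) : Mat L) 0 = a := rfl
lemma e3_one (a b d : V L) : (e3 (a, b, d) : Mat L) 1 = b := rfl
lemma e3_two (a b d : V L) : (e3 (a, b, d) : Mat L) 2 = d := rfl

lemma sum_collapse {δ : Type*} [Fintype δ] (P : Prop) (dstar : δ) (X : ℝ)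
    (inst : ∀ d : δ, Decidable (P ∧ d = dstar)) :
    ∑ d : δ, (@ite _ (P ∧ d = dstar) (inst d) X 0) = if P then X else 0 := by
  by_cases hP : P
  · rw [if_pos hP]
    have hterm : ∀ d : δ, (@ite _ (P ∧ d = dstar) (inst d) X 0)
        = if d = dstar then X else 0 := by
      intro d
      by_cases hd : d = dstar
      · rw [if_pos ⟨hP, hd⟩, if_pos hd]
      · rw [if_neg (fun hc => hd hc.2), if_neg hd]
    rw [Finset.sum_congr rfl fun d _ => hterm d,
      Finset.sum_ite_eq' Finset.univ dstar (fun _ => X)]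
    simp
  · rw [if_neg hP]
    exact Finset.sum_eq_zero fun d _ => if_neg (fun hc => hP hc.1)

lemma sum_const_gen {δ : Type*} [Fintype δ] (f : δ → ℝ) (c : ℝ) (h : ∀ d, f d = c) :
    ∑ d : δ, f d = (Fintype.card δ : ℝ) * c := by
  rw [Finset.sum_congr rfl fun d _ => h d, Finset.sum_const, Finset.card_univ, nsmul_eq_mul]

lemma Gmul_e3 (a b d' : V L) (d c : Row L) :
    ((!![1, 2, 3] : Matrix (Fin 1) (Fin 3) (ZMod 5)) * e3 (a, b, d') = d
        ∧ (!![1, 1, 1] : Matrix (Fin 1) (Fin 3) (ZMod 5)) * e3 (a, b, d') = c)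
      ↔ (b = fun j => 3 * c 0 j - d 0 j - 2 * a j) ∧ (d' = fun j => d 0 j - 2 * c 0 j + a j) := by
  constructor
  · rintro ⟨hG, hF⟩
    have hGj : ∀ j, a j + 2 * b j + 3 * d' j = d 0 j := by
      intro j
      have := congrFun (congrFun hG 0) j
      rw [Gmul_apply] at this
      rw [e3_zero, e3_one, e3_two] at this
      exact this
    have hFj : ∀ j, a j + b j + d' j = c 0 j := by
      intro j
      have := congrFun (congrFun hF 0) j
      rw [Fmul_apply] at this
      rw [e3_zero, e3_one, e3_two] at this
      exact this
    constructor
    · funext j; linear_combination 3 * hFj j - hGj j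
    · funext j; linear_combination hGj j - 2 * hFj j
  · rintro ⟨hb, hd⟩
    subst hb hd
    constructor
    · funext i j
      fin_cases i
      show ((!![1, 2, 3] : Matrix (Fin 1) (Fin 3) (ZMod 5)) * e3 (a, _, _)) 0 j = d 0 j
      rw [Gmul_apply, e3_zero, e3_one, e3_two]
      ring
    · funext i j
      fin_cases i
      show ((!![1, 1, 1] : Matrix (Fin 1) (Fin 3) (ZMod 5)) * e3 (a, _, _)) 0 j = c 0 j
      rw [Fmul_apply, e3_zero, e3_one, e3_two]
      ring

section SchemeLemmas

variable {L : ℕ} {Ω : Type} [Fintype Ω] {κ : Fin 3 → Type} {σ : Type} {χ : Fin 3 → Type}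
  {ι : Type*}

lemma pr_W_Zsrc (S : Scheme (ZMod 5) L !![1, 1, 1] !![1, 2, 3] Ω κ σ χ)
    (w : Mat L) (zs : σ) :
    pr S.p (fun ω => (S.W ω, S.Zsrc ω)) (w, zs)
      = (Fintype.card (Mat L) : ℝ)⁻¹ * pr S.p S.Zsrc zs := by
  have hmem : ∀ ω, (S.W ω, ((fun k => S.Z k ω), S.Zsrc ω)) ∈
      (Finset.univ : Finset (Mat L)) ×ˢ
        Finset.univ.image (fun ω => ((fun k => S.Z k ω), S.Zsrc ω)) :=
    fun ω => Finset.mem_product.2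
      ⟨Finset.mem_univ _, Finset.mem_image_of_mem _ (Finset.mem_univ ω)⟩
  have h : pr S.p (fun ω => (S.W ω, S.Zsrc ω)) (w, zs)
      = ∑ t ∈ (Finset.univ : Finset (Mat L)) ×ˢ
          Finset.univ.image (fun ω => ((fun k => S.Z k ω), S.Zsrc ω)),
          if (t.1, t.2.2) = (w, zs)
            then pr S.p (fun ω => (S.W ω, ((fun k => S.Z k ω), S.Zsrc ω))) t else 0 :=
    pr_marg (fun ω => (S.W ω, ((fun k => S.Z k ω), S.Zsrc ω))) _ hmem
      (fun t => (t.1, t.2.2)) (w, zs)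
  rw [h, Finset.sum_product]
  have hterm : ∀ (w' : Mat L) (z : (∀ k, κ k) × σ),
      (if (((w', z) : Mat L × _).1, ((w', z) : Mat L × _).2.2) = (w, zs)
          then pr S.p (fun ω => (S.W ω, ((fun k => S.Z k ω), S.Zsrc ω))) (w', z) else 0)
        = if w' = w then (if z.2 = zs then (Fintype.card (Mat L) : ℝ)⁻¹ *
            pr S.p (fun ω => ((fun k => S.Z k ω), S.Zsrc ω)) z else 0) else 0 := by
    intro w' z
    rw [S.indep w' z, S.W_unif w']
    by_cases h1 : w' = w <;> by_cases h2 : z.2 = zs <;> simp [h1, h2, Prod.ext_iff]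
  rw [Finset.sum_congr rfl fun w' _ => Finset.sum_congr rfl fun z _ => hterm w' z]
  rw [Finset.sum_comm]
  have hcol : ∀ z : (∀ k, κ k) × σ,
      (∑ w' : Mat L, if w' = w then (if z.2 = zs then (Fintype.card (Mat L) : ℝ)⁻¹ *
          pr S.p (fun ω => ((fun k => S.Z k ω), S.Zsrc ω)) z else 0) else 0)
        = if z.2 = zs then (Fintype.card (Mat L) : ℝ)⁻¹ *
            pr S.p (fun ω => ((fun k => S.Z k ω), S.Zsrc ω)) z else 0 := by
    intro z
    rw [Finset.sum_ite_eq' Finset.univ w]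
    simp
  rw [Finset.sum_congr rfl fun z _ => hcol z]
  have hz : pr S.p S.Zsrc zs
      = ∑ z ∈ Finset.univ.image (fun ω => ((fun k => S.Z k ω), S.Zsrc ω)),
          if z.2 = zs then pr S.p (fun ω => ((fun k => S.Z k ω), S.Zsrc ω)) z else 0 :=
    pr_marg (fun ω => ((fun k => S.Z k ω), S.Zsrc ω)) _
      (fun ω => Finset.mem_image_of_mem _ (Finset.mem_univ ω)) Prod.snd zs
  rw [hz, Finset.mul_sum]
  refine Finset.sum_congr rfl fun z _ => ?_
  split <;> ring

lemma pr_T0 [DecidableEq ι] (S : Scheme (ZMod 5) L !![1, 1, 1] !![1, 2, 3] Ω κ σ χ)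
    (g : Mat L × σ → ι) (b : ι) :
    pr S.p (fun ω => g (S.W ω, S.Zsrc ω)) b
      = (Fintype.card (Mat L) : ℝ)⁻¹ *
          ∑ zs ∈ Finset.univ.image S.Zsrc, ∑ v : V L × V L × V L,
            (if g (e3 v, zs) = b then pr S.p S.Zsrc zs else 0) := by
  have hmem : ∀ ω, ((S.W ω, S.Zsrc ω) : Mat L × σ) ∈
      (Finset.univ : Finset (Mat L)) ×ˢ Finset.univ.image S.Zsrc :=
    fun ω => Finset.mem_product.2
      ⟨Finset.mem_univ _, Finset.mem_image_of_mem _ (Finset.mem_univ ω)⟩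
  have h : pr S.p (fun ω => g (S.W ω, S.Zsrc ω)) b
      = ∑ t ∈ (Finset.univ : Finset (Mat L)) ×ˢ Finset.univ.image S.Zsrc,
          if g t = b then pr S.p (fun ω => (S.W ω, S.Zsrc ω)) t else 0 :=
    pr_marg (fun ω => (S.W ω, S.Zsrc ω)) _ hmem g b
  rw [h, Finset.sum_product_right, Finset.mul_sum]
  refine Finset.sum_congr rfl fun zs _ => ?_
  have hrw : ∀ w' : Mat L,
      (if g (w', zs) = b then pr S.p (fun ω => (S.W ω, S.Zsrc ω)) (w', zs) else 0)
        = (Fintype.card (Mat L) : ℝ)⁻¹ * (if g (w', zs) = b then pr S.p S.Zsrc zs else 0) := by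
    intro w'
    rw [pr_W_Zsrc S]
    split <;> ring
  rw [Finset.sum_congr rfl fun w' _ => hrw w', ← Finset.mul_sum]
  congr 1
  rw [← Equiv.sum_comp (e3 (L := L)) (fun w' => if g (w', zs) = b then pr S.p S.Zsrc zs else 0)]

lemma pr_W_fun [DecidableEq ι] (S : Scheme (ZMod 5) L !![1, 1, 1] !![1, 2, 3] Ω κ σ χ)
    (g : Mat L → ι) (b : ι) :
    pr S.p (fun ω => g (S.W ω)) b
      = (Fintype.card (Mat L) : ℝ)⁻¹ *
          ∑ v : V L × V L × V L, (if g (e3 v) = b then 1 else 0) := by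
  have h : pr S.p (fun ω => g (S.W ω)) b
      = ∑ t ∈ (Finset.univ : Finset (Mat L)),
          if g t = b then pr S.p S.W t else 0 :=
    pr_marg S.W _ (fun ω => Finset.mem_univ _) g b
  rw [h]
  have hrw : ∀ w' : Mat L,
      (if g w' = b then pr S.p S.W w' else 0)
        = (Fintype.card (Mat L) : ℝ)⁻¹ * (if g w' = b then 1 else 0) := by
    intro w'
    rw [S.W_unif w']
    split <;> ring
  rw [Finset.sum_congr rfl fun w' _ => hrw w', ← Finset.mul_sum]
  congr 1
  rw [← Equiv.sum_comp (e3 (L := L)) (fun w' => if g w' = b then (1:ℝ) else 0)]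

end SchemeLemmas

section SchemeLemmas2

variable {L : ℕ} {Ω : Type} [Fintype Ω] {κ : Fin 3 → Type} {σ : Type} {χ : Fin 3 → Type}
  {ι : Type*}

lemma indep_theta (S : Scheme (ZMod 5) L !![1, 1, 1] !![1, 2, 3] Ω κ σ χ)
    (θ : V L × V L × σ → ι) (u : ι) (c : Row L) :
    pr S.p (fun ω => (θ (S.W ω 0, S.W ω 1, S.Zsrc ω),
        (!![1, 1, 1] : Matrix (Fin 1) (Fin 3) (ZMod 5)) * S.W ω)) (u, c)
      = pr S.p (fun ω => θ (S.W ω 0, S.W ω 1, S.Zsrc ω)) u *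
        pr S.p (fun ω => (!![1, 1, 1] : Matrix (Fin 1) (Fin 3) (ZMod 5)) * S.W ω) c := by
  classical
  have hAC : pr S.p (fun ω => (θ (S.W ω 0, S.W ω 1, S.Zsrc ω),
      (!![1, 1, 1] : Matrix (Fin 1) (Fin 3) (ZMod 5)) * S.W ω)) (u, c)
      = (Fintype.card (Mat L) : ℝ)⁻¹ *
          ∑ zs ∈ Finset.univ.image S.Zsrc, ∑ v : V L × V L × V L,
            (if (θ (e3 v 0, e3 v 1, zs),
                  (!![1, 1, 1] : Matrix (Fin 1) (Fin 3) (ZMod 5)) * e3 v) = (u, c)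
              then pr S.p S.Zsrc zs else 0) :=
    pr_T0 S (fun t => (θ (t.1 0, t.1 1, t.2), !![1, 1, 1] * t.1)) (u, c)
  have hA : pr S.p (fun ω => θ (S.W ω 0, S.W ω 1, S.Zsrc ω)) u
      = (Fintype.card (Mat L) : ℝ)⁻¹ *
          ∑ zs ∈ Finset.univ.image S.Zsrc, ∑ v : V L × V L × V L,
            (if θ (e3 v 0, e3 v 1, zs) = u then pr S.p S.Zsrc zs else 0) :=
    pr_T0 S (fun t => θ (t.1 0, t.1 1, t.2)) u
  have hC : pr S.p (fun ω => (!![1, 1, 1] : Matrix (Fin 1) (Fin 3) (ZMod 5)) * S.W ω) c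
      = (Fintype.card (Mat L) : ℝ)⁻¹ *
          ∑ v : V L × V L × V L,
            (if (!![1, 1, 1] : Matrix (Fin 1) (Fin 3) (ZMod 5)) * e3 v = c then (1:ℝ) else 0) :=
    pr_W_fun S (fun w => (!![1, 1, 1] : Matrix (Fin 1) (Fin 3) (ZMod 5)) * w) c
  simp only [Fintype.sum_prod_type, e3_zero, e3_one, Prod.mk.injEq, Fmul_e3,
    sum_collapse] at hAC
  simp only [Fintype.sum_prod_type, e3_zero, e3_one] at hA
  simp only [Fintype.sum_prod_type, Fmul_e3, Finset.sum_ite_eq', Finset.mem_univ,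
    if_true, Finset.sum_const, Finset.card_univ, nsmul_eq_mul, mul_one] at hC
  have hA' : pr S.p (fun ω => θ (S.W ω 0, S.W ω 1, S.Zsrc ω)) u
      = (Fintype.card (Mat L) : ℝ)⁻¹ * ((Fintype.card (V L) : ℝ) *
          ∑ zs ∈ Finset.univ.image S.Zsrc, ∑ a : V L, ∑ b : V L,
            (if θ (a, b, zs) = u then pr S.p S.Zsrc zs else 0)) := by
    rw [hA]
    congr 1
    rw [Finset.mul_sum]
    refine Finset.sum_congr rfl fun zs _ => ?_
    rw [Finset.mul_sum]
    refine Finset.sum_congr rfl fun a _ => ?_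
    rw [Finset.mul_sum]
    refine Finset.sum_congr rfl fun b _ => ?_
    exact sum_const_gen _ _ (fun d => if_congr Iff.rfl rfl rfl)
  rw [hAC, hA', hC]
  have hNQ : (Fintype.card (Mat L) : ℝ) = (Fintype.card (V L) : ℝ) ^ 3 := by
    rw [card_Mat, card_V]
    push_cast
    rw [← pow_mul]
    ring_nf
  have hQpos : (0 : ℝ) < (Fintype.card (V L) : ℝ) := by
    have := Fintype.card_pos (α := V L)
    exact_mod_cast this
  simp only [hNQ]
  field_simp
end SchemeLemmas2

lemma sum_eq_ite_gen {δ : Type*} [Fintype δ] [DecidableEq δ] (dstar : δ) (X : ℝ)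
    (inst : ∀ d : δ, Decidable (d = dstar)) :
    ∑ d : δ, (@ite _ (d = dstar) (inst d) X 0) = X := by
  rw [Finset.sum_eq_single dstar (fun b _ hb => if_neg hb)
    (fun h => absurd (Finset.mem_univ _) h)]
  exact if_pos rfl

lemma sum_pair_eq_ite {δ ε : Type*} [Fintype δ] [Fintype ε] (b0 : δ) (d0 : ε) (X : ℝ)
    (inst : ∀ (b : δ) (e : ε), Decidable ((b, e) = (b0, d0))) :
    ∑ b : δ, ∑ e : ε, (@ite _ ((b, e) = (b0, d0)) (inst b e) X 0) = X := by
  rw [Finset.sum_eq_single b0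
    (fun b _ hb => Finset.sum_eq_zero fun e _ => if_neg (fun hc => hb (congrArg Prod.fst hc)))
    (fun h => absurd (Finset.mem_univ _) h)]
  rw [Finset.sum_eq_single d0
    (fun e _ he => if_neg (fun hc => he (congrArg Prod.snd hc)))
    (fun h => absurd (Finset.mem_univ _) h)]
  exact if_pos rfl

lemma W_recover {L : ℕ} (w : Mat L) :
    (e3 (w 0, w 1, fun j =>
        ((!![1, 1, 1] : Matrix (Fin 1) (Fin 3) (ZMod 5)) * w) 0 j - w 0 j - w 1 j) : Mat L)
      = w := by
  funext i j
  fin_cases i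
  · rfl
  · rfl
  · show ((!![1, 1, 1] : Matrix (Fin 1) (Fin 3) (ZMod 5)) * w) 0 j - w 0 j - w 1 j = w 2 j
    rw [Fmul_apply]
    ring

lemma D_from_BC {L : ℕ} (w : Mat L) :
    (!![1, 2, 3] : Matrix (Fin 1) (Fin 3) (ZMod 5)) * w
      = Matrix.of (fun (_ : Fin 1) j =>
          3 * ((!![1, 1, 1] : Matrix (Fin 1) (Fin 3) (ZMod 5)) * w) 0 j - 2 * w 0 j - w 1 j) := by
  funext i j
  fin_cases i
  show ((!![1, 2, 3] : Matrix (Fin 1) (Fin 3) (ZMod 5)) * w) 0 j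
    = 3 * ((!![1, 1, 1] : Matrix (Fin 1) (Fin 3) (ZMod 5)) * w) 0 j - 2 * w 0 j - w 1 j
  rw [Gmul_apply, Fmul_apply]
  ring

section SchemeLemmas3

variable {L : ℕ} {Ω : Type} [Fintype Ω] {κ : Fin 3 → Type} {σ : Type} {χ : Fin 3 → Type}

lemma pr_DC (S : Scheme (ZMod 5) L !![1, 1, 1] !![1, 2, 3] Ω κ σ χ) (d c : Row L) :
    pr S.p (fun ω => ((!![1, 2, 3] : Matrix (Fin 1) (Fin 3) (ZMod 5)) * S.W ω,
        (!![1, 1, 1] : Matrix (Fin 1) (Fin 3) (ZMod 5)) * S.W ω)) (d, c)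
      = (Fintype.card (Row L × Row L) : ℝ)⁻¹ := by
  have h : pr S.p (fun ω => ((!![1, 2, 3] : Matrix (Fin 1) (Fin 3) (ZMod 5)) * S.W ω,
        (!![1, 1, 1] : Matrix (Fin 1) (Fin 3) (ZMod 5)) * S.W ω)) (d, c)
      = (Fintype.card (Mat L) : ℝ)⁻¹ *
          ∑ v : V L × V L × V L,
            (if ((!![1, 2, 3] : Matrix (Fin 1) (Fin 3) (ZMod 5)) * e3 v,
                (!![1, 1, 1] : Matrix (Fin 1) (Fin 3) (ZMod 5)) * e3 v) = (d, c)
              then (1:ℝ) else 0) :=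
    pr_W_fun S (fun w => ((!![1, 2, 3] : Matrix (Fin 1) (Fin 3) (ZMod 5)) * w,
      (!![1, 1, 1] : Matrix (Fin 1) (Fin 3) (ZMod 5)) * w)) (d, c)
  rw [h]
  have hstep : ∀ v : V L × V L × V L,
      (if ((!![1, 2, 3] : Matrix (Fin 1) (Fin 3) (ZMod 5)) * e3 v,
          (!![1, 1, 1] : Matrix (Fin 1) (Fin 3) (ZMod 5)) * e3 v) = (d, c) then (1:ℝ) else 0)
        = if v.2 = ((fun j => 3 * c 0 j - d 0 j - 2 * v.1 j),
            (fun j => d 0 j - 2 * c 0 j + v.1 j)) then (1:ℝ) else 0 := by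
    intro v
    refine if_congr ?_ rfl rfl
    constructor
    · intro hv
      have h2 := (Gmul_e3 v.1 v.2.1 v.2.2 d c).1
        ⟨congrArg Prod.fst hv, congrArg Prod.snd hv⟩
      exact Prod.ext h2.1 h2.2
    · intro hv
      have h2 := (Gmul_e3 v.1 v.2.1 v.2.2 d c).2
        ⟨congrArg Prod.fst hv, congrArg Prod.snd hv⟩
      exact Prod.ext h2.1 h2.2
  rw [Finset.sum_congr rfl fun v _ => hstep v]
  simp only [Fintype.sum_prod_type]
  have hin : ∀ a : V L,
      (∑ x1 : V L, ∑ y : V L, if (x1, y) = ((fun j => 3 * c 0 j - d 0 j - 2 * a j),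
          (fun j => d 0 j - 2 * c 0 j + a j)) then (1:ℝ) else 0) = 1 :=
    fun a => sum_pair_eq_ite _ _ 1 _
  rw [Finset.sum_congr rfl fun a _ => hin a]
  rw [Finset.sum_const, Finset.card_univ, nsmul_eq_mul, mul_one]
  rw [Fintype.card_prod, card_Row, card_Mat, card_V]
  have h5 : ((5:ℝ) ^ (3 * L)) = 5 ^ L * (5 ^ L * 5 ^ L) := by
    rw [show 3 * L = L + (L + L) by ring, pow_add, pow_add]
  push_cast
  rw [h5]
  have hpos : (0:ℝ) < 5 ^ L := by positivity
  field_simp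

end SchemeLemmas3

end MatrixHelpers
end Lemmas

/-- Over `𝔽₅` with `F = (1,1,1)` and `G = (1,2,3)`, the first two messages
reveal at most `L log 5` of information about the first two input rows. -/
theorem example_two_message_leakage_bound
    {L : ℕ} (hL : 1 ≤ L)
    (Ω : Type) [Fintype Ω] (κ : Fin 3 → Type) (σ : Type) (χ : Fin 3 → Type)
    (S : Scheme (ZMod 5) L (!![1, 1, 1]) (!![1, 2, 3]) Ω κ σ χ) :
    MI S.p (fun ω => (S.X 0 ω, S.X 1 ω)) (fun ω => (S.W ω 0, S.W ω 1))
      ≤ (L : ℝ) * Real.log 5 := by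
  obtain ⟨f0, hf0⟩ := S.X_det 0
  obtain ⟨f1, hf1⟩ := S.X_det 1
  obtain ⟨g0, hg0⟩ := S.Z_det 0
  obtain ⟨g1, hg1⟩ := S.Z_det 1
  have hp : ∀ ω, 0 ≤ S.p ω := S.p_nonneg
  have hp1 : ∑ ω, S.p ω = 1 := S.p_sum_one
  -- independence of `C = F·W` from functions of `(W 0, W 1, Zsrc)`
  have hACadd : H S.p (fun ω => ((S.X 0 ω, S.X 1 ω),
        (!![1, 1, 1] : Matrix (Fin 1) (Fin 3) (ZMod 5)) * S.W ω))
      = H S.p (fun ω => (S.X 0 ω, S.X 1 ω))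
        + H S.p (fun ω => (!![1, 1, 1] : Matrix (Fin 1) (Fin 3) (ZMod 5)) * S.W ω) := by
    refine H_pair_of_indep hp _ _ ?_
    intro a b
    have e : (fun ω => ((S.X 0 ω, S.X 1 ω),
        (!![1, 1, 1] : Matrix (Fin 1) (Fin 3) (ZMod 5)) * S.W ω))
        = (fun ω => ((f0 (S.W ω 0) (g0 (S.Zsrc ω)), f1 (S.W ω 1) (g1 (S.Zsrc ω))),
            (!![1, 1, 1] : Matrix (Fin 1) (Fin 3) (ZMod 5)) * S.W ω)) :=
      funext fun ω => by rw [hf0 ω, hf1 ω, hg0 ω, hg1 ω]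
    have e2 : (fun ω => (S.X 0 ω, S.X 1 ω))
        = (fun ω => (f0 (S.W ω 0) (g0 (S.Zsrc ω)), f1 (S.W ω 1) (g1 (S.Zsrc ω)))) :=
      funext fun ω => by rw [hf0 ω, hf1 ω, hg0 ω, hg1 ω]
    rw [e, e2]
    exact indep_theta S (fun t => (f0 t.1 (g0 t.2.2), f1 t.2.1 (g1 t.2.2))) a b
  have hBCadd : H S.p (fun ω => ((S.W ω 0, S.W ω 1),
        (!![1, 1, 1] : Matrix (Fin 1) (Fin 3) (ZMod 5)) * S.W ω))
      = H S.p (fun ω => (S.W ω 0, S.W ω 1))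
        + H S.p (fun ω => (!![1, 1, 1] : Matrix (Fin 1) (Fin 3) (ZMod 5)) * S.W ω) := by
    refine H_pair_of_indep hp _ _ ?_
    intro a b
    exact indep_theta S (fun t => (t.1, t.2.1)) a b
  have hABCadd : H S.p (fun ω => (((S.X 0 ω, S.X 1 ω), (S.W ω 0, S.W ω 1)),
        (!![1, 1, 1] : Matrix (Fin 1) (Fin 3) (ZMod 5)) * S.W ω))
      = H S.p (fun ω => ((S.X 0 ω, S.X 1 ω), (S.W ω 0, S.W ω 1)))
        + H S.p (fun ω => (!![1, 1, 1] : Matrix (Fin 1) (Fin 3) (ZMod 5)) * S.W ω) := by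
    refine H_pair_of_indep hp _ _ ?_
    intro a b
    have e : (fun ω => (((S.X 0 ω, S.X 1 ω), (S.W ω 0, S.W ω 1)),
        (!![1, 1, 1] : Matrix (Fin 1) (Fin 3) (ZMod 5)) * S.W ω))
        = (fun ω => (((f0 (S.W ω 0) (g0 (S.Zsrc ω)), f1 (S.W ω 1) (g1 (S.Zsrc ω))),
            (S.W ω 0, S.W ω 1)),
            (!![1, 1, 1] : Matrix (Fin 1) (Fin 3) (ZMod 5)) * S.W ω)) :=
      funext fun ω => by rw [hf0 ω, hf1 ω, hg0 ω, hg1 ω]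
    have e2 : (fun ω => ((S.X 0 ω, S.X 1 ω), (S.W ω 0, S.W ω 1)))
        = (fun ω => ((f0 (S.W ω 0) (g0 (S.Zsrc ω)), f1 (S.W ω 1) (g1 (S.Zsrc ω))),
            (S.W ω 0, S.W ω 1))) :=
      funext fun ω => by rw [hf0 ω, hf1 ω, hg0 ω, hg1 ω]
    rw [e, e2]
    exact indep_theta S
      (fun t => ((f0 t.1 (g0 t.2.2), f1 t.2.1 (g1 t.2.2)), (t.1, t.2.1))) a b
  -- uniform entropies
  have hWval : H S.p S.W = Real.log ((5:ℝ) ^ (3 * L)) := by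
    have h := H_uniform hp1 S.W S.W_unif
    rw [h, card_Mat]
    push_cast
    rfl
  have hDCval : H S.p (fun ω => ((!![1, 2, 3] : Matrix (Fin 1) (Fin 3) (ZMod 5)) * S.W ω,
        (!![1, 1, 1] : Matrix (Fin 1) (Fin 3) (ZMod 5)) * S.W ω))
      = Real.log ((5:ℝ) ^ (2 * L)) := by
    have h := H_uniform hp1 (fun ω => ((!![1, 2, 3] : Matrix (Fin 1) (Fin 3) (ZMod 5)) * S.W ω,
        (!![1, 1, 1] : Matrix (Fin 1) (Fin 3) (ZMod 5)) * S.W ω)) (fun a => pr_DC S a.1 a.2)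
    rw [h, Fintype.card_prod, card_Row]
    have : ((5 ^ L * 5 ^ L : ℕ) : ℝ) = (5:ℝ) ^ (2 * L) := by
      push_cast
      rw [← pow_add]
      congr 1
      ring
    rw [this]
  -- determinism congruences
  have hγ1 : H S.p (fun ω => ((S.W ω 0, S.W ω 1),
        ((!![1, 2, 3] : Matrix (Fin 1) (Fin 3) (ZMod 5)) * S.W ω,
         (!![1, 1, 1] : Matrix (Fin 1) (Fin 3) (ZMod 5)) * S.W ω)))
      = H S.p (fun ω => ((S.W ω 0, S.W ω 1),
          (!![1, 1, 1] : Matrix (Fin 1) (Fin 3) (ZMod 5)) * S.W ω)) :=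
    H_congr
      (fun u => (u.1, (Matrix.of (fun (_ : Fin 1) j => 3 * u.2 0 j - 2 * u.1.1 j - u.1.2 j), u.2)))
      (fun u => (u.1, u.2.2))
      (fun ω => by rw [D_from_BC (S.W ω)]) (fun ω => rfl)
  have hγ2 : H S.p (fun ω => ((S.X 0 ω, S.X 1 ω), ((S.W ω 0, S.W ω 1),
        ((!![1, 2, 3] : Matrix (Fin 1) (Fin 3) (ZMod 5)) * S.W ω,
         (!![1, 1, 1] : Matrix (Fin 1) (Fin 3) (ZMod 5)) * S.W ω))))
      = H S.p (fun ω => (((S.X 0 ω, S.X 1 ω), (S.W ω 0, S.W ω 1)),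
          (!![1, 1, 1] : Matrix (Fin 1) (Fin 3) (ZMod 5)) * S.W ω)) :=
    H_congr
      (fun u => (u.1.1, (u.1.2,
        (Matrix.of (fun (_ : Fin 1) j => 3 * u.2 0 j - 2 * u.1.2.1 j - u.1.2.2 j), u.2))))
      (fun u => ((u.1, u.2.1), u.2.2.2))
      (fun ω => by rw [D_from_BC (S.W ω)]) (fun ω => rfl)
  have hγ3 : H S.p (fun ω => ((S.X 0 ω, S.X 1 ω),
        ((!![1, 2, 3] : Matrix (Fin 1) (Fin 3) (ZMod 5)) * S.W ω,
         (!![1, 1, 1] : Matrix (Fin 1) (Fin 3) (ZMod 5)) * S.W ω)))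
      = H S.p (fun ω => ((!![1, 2, 3] : Matrix (Fin 1) (Fin 3) (ZMod 5)) * S.W ω,
          ((S.X 0 ω, S.X 1 ω), (!![1, 1, 1] : Matrix (Fin 1) (Fin 3) (ZMod 5)) * S.W ω))) :=
    H_congr
      (fun u => (u.2.1, (u.1, u.2.2)))
      (fun u => (u.2.1, (u.1, u.2.2)))
      (fun ω => rfl) (fun ω => rfl)
  have hγ4 : H S.p (fun ω => ((S.X 0 ω, S.X 1 ω), ((S.W ω 0, S.W ω 1),
        ((!![1, 2, 3] : Matrix (Fin 1) (Fin 3) (ZMod 5)) * S.W ω,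
         (!![1, 1, 1] : Matrix (Fin 1) (Fin 3) (ZMod 5)) * S.W ω))))
      = H S.p (fun ω => ((S.W ω 0, S.W ω 1), ((S.X 0 ω, S.X 1 ω),
          ((!![1, 2, 3] : Matrix (Fin 1) (Fin 3) (ZMod 5)) * S.W ω,
           (!![1, 1, 1] : Matrix (Fin 1) (Fin 3) (ZMod 5)) * S.W ω)))) :=
    H_congr
      (fun u => (u.2.1, (u.1, u.2.2)))
      (fun u => (u.2.1, (u.1, u.2.2)))
      (fun ω => rfl) (fun ω => rfl)
  have hγ5 : H S.p (fun ω => ((S.W ω 0, S.W ω 1),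
        ((!![1, 2, 3] : Matrix (Fin 1) (Fin 3) (ZMod 5)) * S.W ω,
         (!![1, 1, 1] : Matrix (Fin 1) (Fin 3) (ZMod 5)) * S.W ω)))
      = H S.p S.W :=
    H_congr
      (fun w => ((w 0, w 1), ((!![1, 2, 3] : Matrix (Fin 1) (Fin 3) (ZMod 5)) * w,
        (!![1, 1, 1] : Matrix (Fin 1) (Fin 3) (ZMod 5)) * w)))
      (fun u => e3 (u.1.1, u.1.2, fun j => u.2.2 0 j - u.1.1 j - u.1.2 j))
      (fun ω => rfl) (fun ω => (W_recover (S.W ω)).symm)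
  -- security
  have hsec : H S.p (fun ω => ((!![1, 2, 3] : Matrix (Fin 1) (Fin 3) (ZMod 5)) * S.W ω,
        (!![1, 1, 1] : Matrix (Fin 1) (Fin 3) (ZMod 5)) * S.W ω))
      + H S.p (fun ω => ((fun k => S.X k ω),
          (!![1, 1, 1] : Matrix (Fin 1) (Fin 3) (ZMod 5)) * S.W ω))
      - H S.p (fun ω => ((!![1, 2, 3] : Matrix (Fin 1) (Fin 3) (ZMod 5)) * S.W ω,
          ((fun k => S.X k ω), (!![1, 1, 1] : Matrix (Fin 1) (Fin 3) (ZMod 5)) * S.W ω)))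
      - H S.p (fun ω => (!![1, 1, 1] : Matrix (Fin 1) (Fin 3) (ZMod 5)) * S.W ω) = 0 :=
    S.secure
  have hmono : H S.p (fun ω => ((!![1, 2, 3] : Matrix (Fin 1) (Fin 3) (ZMod 5)) * S.W ω,
        ((fun k => S.X k ω), (!![1, 1, 1] : Matrix (Fin 1) (Fin 3) (ZMod 5)) * S.W ω)))
      - H S.p (fun ω => ((fun k => S.X k ω),
          (!![1, 1, 1] : Matrix (Fin 1) (Fin 3) (ZMod 5)) * S.W ω))
      ≤ H S.p (fun ω => ((!![1, 2, 3] : Matrix (Fin 1) (Fin 3) (ZMod 5)) * S.W ω,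
          ((S.X 0 ω, S.X 1 ω), (!![1, 1, 1] : Matrix (Fin 1) (Fin 3) (ZMod 5)) * S.W ω)))
      - H S.p (fun ω => ((S.X 0 ω, S.X 1 ω),
          (!![1, 1, 1] : Matrix (Fin 1) (Fin 3) (ZMod 5)) * S.W ω)) :=
    Hc_comp_ge hp hp1 (fun ω => (!![1, 2, 3] : Matrix (Fin 1) (Fin 3) (ZMod 5)) * S.W ω)
      (fun ω => ((fun k => S.X k ω), (!![1, 1, 1] : Matrix (Fin 1) (Fin 3) (ZMod 5)) * S.W ω))
      (fun v => ((v.1 0, v.1 1), v.2))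
  have hpair : H S.p (fun ω => ((S.X 0 ω, S.X 1 ω),
        ((!![1, 2, 3] : Matrix (Fin 1) (Fin 3) (ZMod 5)) * S.W ω,
         (!![1, 1, 1] : Matrix (Fin 1) (Fin 3) (ZMod 5)) * S.W ω)))
      ≤ H S.p (fun ω => ((S.W ω 0, S.W ω 1), ((S.X 0 ω, S.X 1 ω),
          ((!![1, 2, 3] : Matrix (Fin 1) (Fin 3) (ZMod 5)) * S.W ω,
           (!![1, 1, 1] : Matrix (Fin 1) (Fin 3) (ZMod 5)) * S.W ω)))) :=
    H_le_H_pair hp _ _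
  have hlog : Real.log ((5:ℝ) ^ (3 * L)) - Real.log ((5:ℝ) ^ (2 * L))
      = (L : ℝ) * Real.log 5 := by
    rw [Real.log_pow, Real.log_pow]
    push_cast
    ring
  show H S.p (fun ω => (S.X 0 ω, S.X 1 ω)) + H S.p (fun ω => (S.W ω 0, S.W ω 1))
      - H S.p (fun ω => ((S.X 0 ω, S.X 1 ω), (S.W ω 0, S.W ω 1)))
    ≤ (L : ℝ) * Real.log 5
  linarith [hACadd, hBCadd, hABCadd, hWval, hDCval, hγ1, hγ2, hγ3, hγ4, hγ5,
    hsec, hmono, hpair, hlog]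

end SecAgg
end

section
/- Let 𝔽 = F_5, K = 3, F = (1, 1, 1) and G = (1, 2, 3) as 1×3 row vectors. There exists a secure aggregation scheme for (F, G) with input length L = 3 in which each key Z_k (k = 1, 2, 3) takes values in 𝔽^2 and each message X_k takes values in 𝔽^3; in particular the individual key rate 2/3 is achievable. -/
/-!
Shannon entropy machinery for finitely-supported random variables on a finite
probability space, and the definition of a vector-linear secure aggregation
scheme (Yuan–Sun, "Vector Linear Secure Aggregation").
-/

open scoped BigOperators Classical

namespace SecAgg

noncomputable section Aux

lemma pr_of_equiv {Ω α γ : Type*} [Fintype Ω] [Fintype α] [Fintype γ] [Nonempty γ]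
    (T : Ω → α) (e : Ω ≃ α × γ) (he : ∀ ω, (e ω).1 = T ω) (a : α) :
    pr (fun _ : Ω => (Fintype.card Ω : ℝ)⁻¹) T a = (Fintype.card α : ℝ)⁻¹ := by
  classical
  have hcard : Fintype.card Ω = Fintype.card α * Fintype.card γ := by
    rw [← Fintype.card_prod]; exact Fintype.card_congr e
  have h1 : pr (fun _ : Ω => (Fintype.card Ω : ℝ)⁻¹) T a
      = ∑ x : α × γ, (if x.1 = a then (Fintype.card Ω : ℝ)⁻¹ else 0) := by
    rw [pr, ← Equiv.sum_comp e.symm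
      (fun x => if T x = a then (Fintype.card Ω : ℝ)⁻¹ else 0)]
    refine Finset.sum_congr rfl fun x _ => ?_
    have : T (e.symm x) = x.1 := by rw [← he]; simp
    rw [this]
  rw [h1, Fintype.sum_prod_type]
  have h2 : ∀ x : α, (∑ _y : γ, if x = a then (Fintype.card Ω : ℝ)⁻¹ else 0)
      = if x = a then (Fintype.card γ : ℝ) * (Fintype.card Ω : ℝ)⁻¹ else 0 := by
    intro x
    by_cases hx : x = a <;> simp [hx, Finset.sum_const, Finset.card_univ, nsmul_eq_mul]
  simp only [h2]
  rw [Finset.sum_ite_eq' Finset.univ a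
    (fun _ => (Fintype.card γ : ℝ) * (Fintype.card Ω : ℝ)⁻¹)]
  simp only [Finset.mem_univ, if_true]
  have hγ : (0:ℝ) < Fintype.card γ := by exact_mod_cast Fintype.card_pos
  have hα : (0:ℝ) < Fintype.card α := by
    have : Nonempty α := ⟨a⟩
    exact_mod_cast Fintype.card_pos
  rw [hcard]
  push_cast
  field_simp

lemma H_unif {Ω α : Type*} [Fintype Ω] [Fintype α] [Nonempty α]
    (p : Ω → ℝ) (T : Ω → α) (h : ∀ a, pr p T a = (Fintype.card α : ℝ)⁻¹) :
    H p T = Real.log (Fintype.card α) := by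
  classical
  have hα : (0:ℝ) < Fintype.card α := by exact_mod_cast Fintype.card_pos
  have himg : Finset.univ.image T = Finset.univ := by
    refine Finset.eq_univ_of_forall fun a => ?_
    rw [Finset.mem_image]
    by_contra hc
    push_neg at hc
    have h0 : pr p T a = 0 := by
      rw [pr]
      refine Finset.sum_eq_zero fun ω _ => ?_
      rw [if_neg (fun hw => hc ω (Finset.mem_univ ω) hw)]
    rw [h a] at h0
    exact absurd h0 (by positivity)
  rw [H, himg]
  simp only [h]
  rw [Finset.sum_const, Finset.card_univ, nsmul_eq_mul, Real.negMulLog, Real.log_inv]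
  field_simp

lemma H_comp_inj {Ω α β : Type*} [Fintype Ω] (p : Ω → ℝ) (T : Ω → α)
    (g : α → β) (hg : Function.Injective g) :
    H p (fun ω => g (T ω)) = H p T := by
  classical
  have hpr : ∀ a, pr p (fun ω => g (T ω)) (g a) = pr p T a := by
    intro a
    rw [pr, pr]
    exact Finset.sum_congr rfl fun ω _ => by rw [show (g (T ω) = g a) = (T ω = a) from propext hg.eq_iff]
  have himg : Finset.univ.image (fun ω => g (T ω)) = (Finset.univ.image T).image g := by
    ext b
    simp [Finset.mem_image]
  rw [H, H, himg, Finset.sum_image (fun x _ y _ hxy => hg hxy)]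
  exact Finset.sum_congr rfl fun a _ => by rw [hpr]

lemma pr_fst_prod {M S β : Type*} [Fintype M] [Fintype S] [Nonempty M] [Nonempty S]
    (h : S → β) (w : M) (z : β) :
    pr (fun _ : M × S => (Fintype.card (M × S) : ℝ)⁻¹) (fun ω => (ω.1, h ω.2)) (w, z)
      = pr (fun _ : M × S => (Fintype.card (M × S) : ℝ)⁻¹) (fun ω => ω.1) w
        * pr (fun _ : M × S => (Fintype.card (M × S) : ℝ)⁻¹) (fun ω => h ω.2) z := by
  classical
  set c : ℝ := (Fintype.card (M × S) : ℝ)⁻¹ with hc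
  have hcpos : c * (Fintype.card M * Fintype.card S) = 1 := by
    rw [hc, Fintype.card_prod]
    push_cast
    have hM : (0:ℝ) < Fintype.card M := by exact_mod_cast Fintype.card_pos
    have hS : (0:ℝ) < Fintype.card S := by exact_mod_cast Fintype.card_pos
    rw [inv_mul_cancel₀ (by positivity)]
  rw [pr, pr, pr, Fintype.sum_prod_type, Fintype.sum_prod_type, Fintype.sum_prod_type]
  dsimp only
  trans (∑ m : M, ∑ s : S, (if m = w then (1:ℝ) else 0) * (if h s = z then c else 0))
  · refine Finset.sum_congr rfl fun m _ => Finset.sum_congr rfl fun s _ => ?_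
    by_cases h1 : m = w <;> by_cases h2 : h s = z <;> simp [h1, h2, Prod.ext_iff]
  rw [← Fintype.sum_mul_sum]
  have hA : (∑ m : M, if m = w then (1:ℝ) else 0) = 1 := by simp
  have hB : (∑ m : M, ∑ _s : S, if m = w then c else 0) = (Fintype.card S : ℝ) * c := by
    have : ∀ m : M, (∑ _s : S, if m = w then c else 0)
        = if m = w then (Fintype.card S : ℝ) * c else 0 := by
      intro m
      by_cases hm : m = w <;> simp [hm, Finset.sum_const, Finset.card_univ, nsmul_eq_mul]
    simp only [this]
    simp
  have hC : (∑ _m : M, ∑ s : S, if h s = z then c else 0)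
      = (Fintype.card M : ℝ) * (∑ s : S, if h s = z then c else 0) := by
    rw [Finset.sum_const, Finset.card_univ, nsmul_eq_mul]
  rw [hA, one_mul, hB, hC]
  have : (Fintype.card S : ℝ) * c * ((Fintype.card M : ℝ) * (∑ s : S, if h s = z then c else 0))
      = (c * ((Fintype.card M : ℝ) * (Fintype.card S : ℝ)))
        * (∑ s : S, if h s = z then c else 0) := by ring
  rw [this, hcpos, one_mul]

end Aux

noncomputable section Cons

abbrev F5 := ZMod 5
abbrev MS := Matrix (Fin 3) (Fin 3) F5
abbrev SK := Fin 3 → F5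
abbrev Fm : Matrix (Fin 1) (Fin 3) F5 := !![1,1,1]
abbrev Gm : Matrix (Fin 1) (Fin 3) F5 := !![1,2,3]

lemma five_eq : (5 : F5) = 0 := by decide

/-- noise rows: row k is user k's additive noise -/
def Nz (s : SK) : Fin 3 → Fin 3 → F5 :=
  ![![0, 4 * s 1, 2 * s 2], ![4 * s 0, s 1, 0], ![s 0, 0, 3 * s 2]]

lemma Nz_Fsum (s : SK) (j : Fin 3) : Nz s 0 j + Nz s 1 j + Nz s 2 j = 0 := by
  fin_cases j <;> simp [Nz] <;>
    [linear_combination s 0 * five_eq; linear_combination s 1 * five_eq;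
     linear_combination s 2 * five_eq]

lemma Nz_Gsum (s : SK) (j : Fin 3) :
    Nz s 0 j + 2 * Nz s 1 j + 3 * Nz s 2 j = s j := by
  fin_cases j <;> simp [Nz] <;>
    [linear_combination 2 * s 0 * five_eq; linear_combination s 1 * five_eq;
     linear_combination 2 * s 2 * five_eq]

lemma mulF_apply (w : MS) (i : Fin 1) (j : Fin 3) :
    (Fm * w) i j = w 0 j + w 1 j + w 2 j := by
  have : i = 0 := Subsingleton.elim i 0
  subst this
  simp [Matrix.mul_apply, Fin.sum_univ_three, Fm]

lemma mulG_apply (w : MS) (i : Fin 1) (j : Fin 3) :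
    (Gm * w) i j = w 0 j + 2 * w 1 j + 3 * w 2 j := by
  have : i = 0 := Subsingleton.elim i 0
  subst this
  simp [Matrix.mul_apply, Fin.sum_univ_three, Gm]

def eX : MS × SK ≃ (Fin 3 → Fin 3 → F5) × SK where
  toFun ω := (fun k j => ω.1 k j + Nz ω.2 k j, ω.2)
  invFun x := (Matrix.of fun k j => x.1 k j - Nz x.2 k j, x.2)
  left_inv ω := by
    refine Prod.ext ?_ rfl
    ext k j
    simp [Matrix.of_apply]
  right_inv x := by
    refine Prod.ext ?_ rfl
    funext k j
    simp [Matrix.of_apply]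

def eF : MS × SK ≃ Matrix (Fin 1) (Fin 3) F5 × ((Fin 3 → F5) × (Fin 3 → F5) × SK) where
  toFun ω := (Fm * ω.1, (ω.1 1, ω.1 2, ω.2))
  invFun y := (Matrix.of ![fun j => y.1 0 j - y.2.1 j - y.2.2.1 j, y.2.1, y.2.2.1], y.2.2.2)
  left_inv ω := by
    refine Prod.ext ?_ rfl
    ext k j
    fin_cases k <;> simp [Matrix.of_apply, mulF_apply] <;> ring
  right_inv y := by
    refine Prod.ext ?_ rfl
    ext k j
    have hk : k = 0 := Subsingleton.elim k 0
    subst hk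
    simp [Matrix.of_apply, mulF_apply]
    ring
  
def eGF : MS × SK ≃ (Matrix (Fin 1) (Fin 3) F5 × Matrix (Fin 1) (Fin 3) F5)
    × ((Fin 3 → F5) × SK) where
  toFun ω := ((Gm * ω.1, Fm * ω.1), (ω.1 2, ω.2))
  invFun y := (Matrix.of ![fun j => 2 * y.1.2 0 j - y.1.1 0 j + y.2.1 j,
      fun j => y.1.1 0 j - y.1.2 0 j - 2 * y.2.1 j, y.2.1], y.2.2)
  left_inv ω := by
    refine Prod.ext ?_ rfl
    ext k j
    fin_cases k <;> simp [Matrix.of_apply, mulF_apply, mulG_apply] <;> ring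
  right_inv y := by
    refine Prod.ext (Prod.ext ?_ ?_) rfl <;>
    · ext k j
      have hk : k = 0 := Subsingleton.elim k 0
      subst hk
      simp [Matrix.of_apply, mulF_apply, mulG_apply]
      ring

def recS (g : Matrix (Fin 1) (Fin 3) F5) (x : Fin 3 → Fin 3 → F5) : SK :=
  fun j => x 0 j + 2 * x 1 j + 3 * x 2 j - g 0 j

def eGX0 : MS × SK ≃ Matrix (Fin 1) (Fin 3) F5 × (Fin 3 → Fin 3 → F5) where
  toFun ω := (Gm * ω.1, fun k j => ω.1 k j + Nz ω.2 k j)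
  invFun y := (Matrix.of fun k j => y.2 k j - Nz (recS y.1 y.2) k j, recS y.1 y.2)
  left_inv ω := by
    have hs : recS (Gm * ω.1) (fun k j => ω.1 k j + Nz ω.2 k j) = ω.2 := by
      funext j
      have h1 := Nz_Gsum ω.2 j
      simp only [recS, mulG_apply]
      linear_combination h1
    refine Prod.ext ?_ hs
    ext k j
    simp only [Matrix.of_apply, hs]
    ring
  right_inv y := by
    refine Prod.ext ?_ ?_
    · ext k j
      have hk : k = 0 := Subsingleton.elim k 0
      subst hk
      have h1 := Nz_Gsum (recS y.1 y.2) j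
      have h2 : recS y.1 y.2 j = y.2 0 j + 2 * y.2 1 j + 3 * y.2 2 j - y.1 0 j := rfl
      simp only [mulG_apply, Matrix.of_apply]
      linear_combination -h1 - h2
    · funext k j
      simp [Matrix.of_apply]

def eGX : MS × SK ≃ (Matrix (Fin 1) (Fin 3) F5 × (Fin 3 → Fin 3 → F5)) × Unit :=
  eGX0.trans (Equiv.prodPUnit _).symm

end Cons

noncomputable section Main

abbrev Om5 := MS × SK

def p5 : Om5 → ℝ := fun _ => (Fintype.card Om5 : ℝ)⁻¹

lemma sumNoise (ω : Om5) (i : Fin 1) (j : Fin 3) :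
    (Fm * ω.1) i j = (ω.1 0 j + Nz ω.2 0 j) + (ω.1 1 j + Nz ω.2 1 j)
      + (ω.1 2 j + Nz ω.2 2 j) := by
  rw [mulF_apply]
  linear_combination -Nz_Fsum ω.2 j

end Main

theorem example_individual_key_achievability' :
    ∃ (Ω : Type) (instΩ : Fintype Ω) (σ : Type),
      Nonempty (Scheme (ZMod 5) 3 (!![1, 1, 1]) (!![1, 2, 3]) Ω
        (fun _ => Fin 2 → ZMod 5) σ (fun _ => Fin 3 → ZMod 5)) := by
  classical
  refine ⟨Om5, inferInstance, SK, ⟨?_⟩⟩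
  refine
    { p := p5
      p_nonneg := fun ω => inv_nonneg.mpr (Nat.cast_nonneg _)
      p_sum_one := ?_
      W := fun ω => ω.1
      Z := fun k ω => ![![ω.2 1, ω.2 2], ![ω.2 0, ω.2 1], ![ω.2 0, ω.2 2]] k
      Zsrc := fun ω => ω.2
      X := fun k ω j => ω.1 k j + Nz ω.2 k j
      W_unif := fun w => pr_of_equiv _ (Equiv.refl Om5) (fun _ => rfl) w
      indep := fun w z =>
        pr_fst_prod (fun s : SK =>
          ((fun k => ![![s 1, s 2], ![s 0, s 1], ![s 0, s 2]] k), s)) w z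
      Z_det := fun k =>
        ⟨fun s => ![![s 1, s 2], ![s 0, s 1], ![s 0, s 2]] k, fun ω => rfl⟩
      X_det := ?_
      correct := ?_
      secure := ?_ }
  · -- p_sum_one
    rw [show (∑ ω : Om5, p5 ω) = ∑ _ω : Om5, (Fintype.card Om5 : ℝ)⁻¹ from rfl]
    rw [Finset.sum_const, Finset.card_univ, nsmul_eq_mul,
      mul_inv_cancel₀ (Nat.cast_ne_zero.mpr Fintype.card_ne_zero)]
  · -- X_det
    intro k
    fin_cases k
    · exact ⟨fun w z j => w j + ![0, 4 * z 0, 2 * z 1] j, fun ω => rfl⟩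
    · exact ⟨fun w z j => w j + ![4 * z 0, z 1, 0] j, fun ω => rfl⟩
    · exact ⟨fun w z j => w j + ![z 0, 0, 3 * z 1] j, fun ω => rfl⟩
  · -- correct
    show H p5 (fun ω : Om5 => ((Fm * ω.1 : Matrix (Fin 1) (Fin 3) F5),
        (fun k j => ω.1 k j + Nz ω.2 k j : Fin 3 → Fin 3 → F5)))
      - H p5 (fun (ω : Om5) (k : Fin 3) (j : Fin 3) => ω.1 k j + Nz ω.2 k j) = 0
    have hfun : (fun ω : Om5 => ((Fm * ω.1 : Matrix (Fin 1) (Fin 3) F5),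
        (fun k j => ω.1 k j + Nz ω.2 k j : Fin 3 → Fin 3 → F5)))
        = fun ω : Om5 =>
          (fun x : Fin 3 → Fin 3 → F5 =>
            ((Matrix.of fun (_ : Fin 1) j => x 0 j + x 1 j + x 2 j :
                Matrix (Fin 1) (Fin 3) F5), x))
          (fun k j => ω.1 k j + Nz ω.2 k j) := by
      funext ω
      refine Prod.ext ?_ rfl
      ext i j
      exact sumNoise ω i j
    rw [hfun,
      H_comp_inj p5 (fun ω : Om5 => (fun k j => ω.1 k j + Nz ω.2 k j : Fin 3 → Fin 3 → F5))
        (fun x : Fin 3 → Fin 3 → F5 =>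
          ((Matrix.of fun (_ : Fin 1) j => x 0 j + x 1 j + x 2 j :
              Matrix (Fin 1) (Fin 3) F5), x))
        (fun a b hab => congrArg Prod.snd hab), sub_self]
  · -- secure
    show H p5 (fun ω : Om5 => ((Gm * ω.1 : Matrix (Fin 1) (Fin 3) F5),
          (Fm * ω.1 : Matrix (Fin 1) (Fin 3) F5)))
        + H p5 (fun ω : Om5 =>
            ((fun k j => ω.1 k j + Nz ω.2 k j : Fin 3 → Fin 3 → F5),
              (Fm * ω.1 : Matrix (Fin 1) (Fin 3) F5)))
        - H p5 (fun ω : Om5 => ((Gm * ω.1 : Matrix (Fin 1) (Fin 3) F5),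
            (fun k j => ω.1 k j + Nz ω.2 k j : Fin 3 → Fin 3 → F5),
            (Fm * ω.1 : Matrix (Fin 1) (Fin 3) F5)))
        - H p5 (fun ω : Om5 => (Fm * ω.1 : Matrix (Fin 1) (Fin 3) F5)) = 0
    have h1 : H p5 (fun ω : Om5 =>
        ((fun k j => ω.1 k j + Nz ω.2 k j : Fin 3 → Fin 3 → F5),
          (Fm * ω.1 : Matrix (Fin 1) (Fin 3) F5)))
        = H p5 (fun ω : Om5 =>
            (fun k j => ω.1 k j + Nz ω.2 k j : Fin 3 → Fin 3 → F5)) := by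
      have hfun : (fun ω : Om5 =>
          ((fun k j => ω.1 k j + Nz ω.2 k j : Fin 3 → Fin 3 → F5),
            (Fm * ω.1 : Matrix (Fin 1) (Fin 3) F5)))
          = fun ω : Om5 =>
            (fun x : Fin 3 → Fin 3 → F5 =>
              (x, (Matrix.of fun (_ : Fin 1) j => x 0 j + x 1 j + x 2 j :
                Matrix (Fin 1) (Fin 3) F5)))
            (fun k j => ω.1 k j + Nz ω.2 k j) := by
        funext ω
        refine Prod.ext rfl ?_
        ext i j
        exact sumNoise ω i j
      rw [hfun]
      exact H_comp_inj p5
        (fun ω : Om5 => (fun k j => ω.1 k j + Nz ω.2 k j : Fin 3 → Fin 3 → F5))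
        (fun x : Fin 3 → Fin 3 → F5 =>
          (x, (Matrix.of fun (_ : Fin 1) j => x 0 j + x 1 j + x 2 j :
              Matrix (Fin 1) (Fin 3) F5)))
        (fun a b hab => congrArg Prod.fst hab)
    have h2 : H p5 (fun ω : Om5 => ((Gm * ω.1 : Matrix (Fin 1) (Fin 3) F5),
          (fun k j => ω.1 k j + Nz ω.2 k j : Fin 3 → Fin 3 → F5),
          (Fm * ω.1 : Matrix (Fin 1) (Fin 3) F5)))
        = H p5 (fun ω : Om5 => ((Gm * ω.1 : Matrix (Fin 1) (Fin 3) F5),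
            (fun k j => ω.1 k j + Nz ω.2 k j : Fin 3 → Fin 3 → F5))) := by
      have hfun : (fun ω : Om5 => ((Gm * ω.1 : Matrix (Fin 1) (Fin 3) F5),
            (fun k j => ω.1 k j + Nz ω.2 k j : Fin 3 → Fin 3 → F5),
            (Fm * ω.1 : Matrix (Fin 1) (Fin 3) F5)))
          = fun ω : Om5 =>
            (fun y : Matrix (Fin 1) (Fin 3) F5 × (Fin 3 → Fin 3 → F5) =>
              (y.1, y.2, (Matrix.of fun (_ : Fin 1) j => y.2 0 j + y.2 1 j + y.2 2 j :
                Matrix (Fin 1) (Fin 3) F5)))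
            ((Gm * ω.1 : Matrix (Fin 1) (Fin 3) F5),
              (fun k j => ω.1 k j + Nz ω.2 k j : Fin 3 → Fin 3 → F5)) := by
        funext ω
        refine Prod.ext rfl (Prod.ext rfl ?_)
        ext i j
        exact sumNoise ω i j
      rw [hfun]
      refine H_comp_inj p5
        (fun ω : Om5 => ((Gm * ω.1 : Matrix (Fin 1) (Fin 3) F5),
          (fun k j => ω.1 k j + Nz ω.2 k j : Fin 3 → Fin 3 → F5)))
        (fun y : Matrix (Fin 1) (Fin 3) F5 × (Fin 3 → Fin 3 → F5) =>
          (y.1, y.2, (Matrix.of fun (_ : Fin 1) j => y.2 0 j + y.2 1 j + y.2 2 j :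
            Matrix (Fin 1) (Fin 3) F5)))
        ?_
      intro a b hab
      have ha : a.1 = b.1 := congrArg (fun p => p.1) hab
      have hb : a.2 = b.2 := congrArg (fun p => p.2.1) hab
      exact Prod.ext ha hb
    rw [h1, h2]
    have hGF := H_unif p5 (fun ω : Om5 => ((Gm * ω.1 : Matrix (Fin 1) (Fin 3) F5),
        (Fm * ω.1 : Matrix (Fin 1) (Fin 3) F5)))
      (fun a => pr_of_equiv _ eGF (fun ω => rfl) a)
    have hX := H_unif p5
      (fun ω : Om5 => (fun k j => ω.1 k j + Nz ω.2 k j : Fin 3 → Fin 3 → F5))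
      (fun a => pr_of_equiv _ eX (fun ω => rfl) a)
    have hGX := H_unif p5 (fun ω : Om5 => ((Gm * ω.1 : Matrix (Fin 1) (Fin 3) F5),
        (fun k j => ω.1 k j + Nz ω.2 k j : Fin 3 → Fin 3 → F5)))
      (fun a => pr_of_equiv _ eGX (fun ω => rfl) a)
    have hF := H_unif p5 (fun ω : Om5 => (Fm * ω.1 : Matrix (Fin 1) (Fin 3) F5))
      (fun a => pr_of_equiv _ eF (fun ω => rfl) a)
    rw [hGF, hX, hGX, hF]
    have c1 : Fintype.card (Matrix (Fin 1) (Fin 3) F5) = 125 := by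
      rw [show Fintype.card (Matrix (Fin 1) (Fin 3) F5)
          = Fintype.card (Fin 1 → Fin 3 → F5) from rfl,
        Fintype.card_fun, Fintype.card_fun, ZMod.card]
      simp only [Fintype.card_fin]
      norm_num
    have c2 : Fintype.card (Fin 3 → Fin 3 → F5) = 1953125 := by
      rw [Fintype.card_fun, Fintype.card_fun, ZMod.card]
      simp only [Fintype.card_fin]
      norm_num
    rw [Fintype.card_prod, Fintype.card_prod, c1, c2]
    push_cast
    rw [← Real.log_mul (by norm_num) (by norm_num), sub_sub,
      ← Real.log_mul (by norm_num) (by norm_num)]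
    norm_num

/-- **Individual key rate `2/3` is achievable for the open example.** Over `𝔽₅`
with `F = (1,1,1)`, `G = (1,2,3)` and input length `L = 3`, there is a secure
aggregation scheme in which every key takes values in `𝔽₅²` and every message
takes values in `𝔽₅³`. -/
theorem example_individual_key_achievability :
    ∃ (Ω : Type) (instΩ : Fintype Ω) (σ : Type),
      Nonempty (Scheme (ZMod 5) 3 (!![1, 1, 1]) (!![1, 2, 3]) Ω
        (fun _ => Fin 2 → ZMod 5) σ (fun _ => Fin 3 → ZMod 5)) :=
  example_individual_key_achievability'

end SecAgg
end
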